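/- arXiv:2402.08714 — 3 statements merged into one kernel-verified Lean document; each statement's English description precedes it below -/
import Mathlib

section
/- Necessary and sufficient condition for optimality via reward differences (Lemma 3): let Ω be a measurable space, Q a probability measure on Ω, r : Ω → ℝ a bounded measurable function, β > 0, Z = ∫ exp(r(x)/β) dQ(x), and Q* = Q.withDensity (fun x => exp(r(x)/β) / Z). Let P be a probability measure on Ω of the form P = Q.withDensity p for a measurable function p : Ω → ℝ with p(x) > 0 for Q-almost every x. Then P = Q* if and only if log p(x) − log p(y) = (r(x) − r(y)) / β for (Q ⊗ Q)-almost every pair (x, y) ∈ Ω × Ω. -/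
/-!
`P = Q*` exactly when `log p - r / β` is `Q`-a.e. constant: one direction reads the density off
the Radon–Nikodym derivative of the tilted measure, the other uses that a density proportional
to `exp (r / β)` of total mass one is the tilted density. A function is `Q`-a.e. constant iff it
takes equal values at `(Q ⊗ Q)`-almost every pair, which is the stated condition after moving
`r / β` across.
-/

open MeasureTheory Real ENNReal
open scoped Classical

/-- The Kullback–Leibler divergence between two measures, valued in the extended
nonnegative reals. It is finite exactly when `μ ≪ ν` and the log-likelihood ratio
`llr μ ν` is `μ`-integrable, in which case it equals `∫ x, llr μ ν x ∂μ`. -/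

noncomputable def klDiv {Ω : Type*} [MeasurableSpace Ω] (μ ν : Measure Ω) : ℝ≥0∞ :=
  if μ ≪ ν ∧ Integrable (llr μ ν) μ then ENNReal.ofReal (∫ x, llr μ ν x ∂μ) else ⊤

namespace MeasureTheory

variable {α : Type*} [MeasurableSpace α] {μ : Measure α}

lemma integrable_exp_of_le [IsFiniteMeasure μ] {f : α → ℝ} {C : ℝ}
    (hf : AEStronglyMeasurable f μ) (hfC : ∀ᵐ x ∂μ, f x ≤ C) :
    Integrable (fun x => exp (f x)) μ :=
  .of_bound (continuous_exp.comp_aestronglyMeasurable hf) (exp C) <| by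
    filter_upwards [hfC] with x hx
    rw [norm_of_nonneg (exp_pos _).le]
    exact exp_le_exp.2 hx

lemma ae_prod_eq_iff_exists_ae_eq_const [SFinite μ] [NeZero μ] {γ : Type*} {g : α → γ} :
    (∀ᵐ z ∂μ.prod μ, g z.1 = g z.2) ↔ ∃ c, ∀ᵐ x ∂μ, g x = c := by
  constructor
  · intro h
    obtain ⟨x₀, hx₀⟩ := (Measure.ae_ae_of_ae_prod h).exists
    exact ⟨g x₀, hx₀.mono fun _ hx => hx.symm⟩
  · rintro ⟨c, hc⟩
    filter_upwards [Measure.quasiMeasurePreserving_fst.ae hc,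
      Measure.quasiMeasurePreserving_snd.ae hc] with z h₁ h₂
    rw [h₁, h₂]

lemma tilted_add_const (f : α → ℝ) (c : ℝ) :
    μ.tilted (fun x => f x + c) = μ.tilted f := by
  simp only [Measure.tilted, exp_add, integral_mul_const, mul_div_mul_right _ _ (exp_pos c).ne']

lemma withDensity_ofReal_exp_eq_tilted {g : α → ℝ} (hg : AEMeasurable g μ)
    [IsProbabilityMeasure (μ.withDensity fun x => ENNReal.ofReal (exp (g x)))] :
    μ.withDensity (fun x => ENNReal.ofReal (exp (g x))) = μ.tilted g := by
  have hZ : ∫ x, exp (g x) ∂μ = 1 := by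
    rw [integral_eq_lintegral_of_nonneg_ae (ae_of_all _ fun x => (exp_pos _).le)
      (measurable_exp.comp_aemeasurable hg).aestronglyMeasurable, ← setLIntegral_univ,
      ← withDensity_apply _ MeasurableSet.univ, measure_univ, ENNReal.toReal_one]
  simp only [Measure.tilted, hZ, div_one]

lemma withDensity_ofReal_eq_tilted_iff [SigmaFinite μ] {f p : α → ℝ}
    (hf : Integrable (fun x => exp (f x)) μ) (hp : Measurable p) (hp_pos : ∀ᵐ x ∂μ, 0 < p x)
    [IsProbabilityMeasure (μ.withDensity fun x => ENNReal.ofReal (p x))] :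
    μ.withDensity (fun x => ENNReal.ofReal (p x)) = μ.tilted f ↔
      ∃ c, ∀ᵐ x ∂μ, log (p x) - f x = c := by
  constructor
  · intro hP
    have hlog : (fun x => log (p x)) =ᵐ[μ]
        fun x => log ((μ.withDensity fun x => ENNReal.ofReal (p x)).rnDeriv μ x).toReal := by
      filter_upwards [Measure.rnDeriv_withDensity μ hp.ennreal_ofReal, hp_pos] with x hx hpx
      rw [hx, ENNReal.toReal_ofReal hpx.le]
    rw [hP] at hlog
    refine ⟨-log (∫ x, exp (f x) ∂μ), ?_⟩
    filter_upwards [hlog.trans (log_rnDeriv_tilted_left_self hf)] with x hx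
    rw [hx]
    ring
  · rintro ⟨c, hc⟩
    have hp_exp : (fun x => ENNReal.ofReal (p x)) =ᵐ[μ]
        fun x => ENNReal.ofReal (exp (log (p x))) := by
      filter_upwards [hp_pos] with x hx
      rw [exp_log hx]
    have hlog : (fun x => log (p x)) =ᵐ[μ] fun x => f x + c := by
      filter_upwards [hc] with x hx
      rw [← hx]
      ring
    have : IsProbabilityMeasure (μ.withDensity fun x => ENNReal.ofReal (exp (log (p x)))) := by
      rwa [← withDensity_congr_ae hp_exp]
    rw [withDensity_congr_ae hp_exp, withDensity_ofReal_exp_eq_tilted hp.log.aemeasurable,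
      tilted_congr hlog, tilted_add_const]

end MeasureTheory

/-- Necessary and sufficient condition for optimality via reward differences (Lemma 3):
a probability measure `P = Q.withDensity p` with `Q`-a.e. positive density `p` equals
the tilted optimal measure `Q*` if and only if, for `(Q ⊗ Q)`-almost every pair
`(x, y)`, the difference of log densities predicts the scaled reward difference:
`log (p x) - log (p y) = (r x - r y) / β`. -/
theorem eq_tilted_iff_log_density_diff_eq_reward_diff
    {Ω : Type*} [MeasurableSpace Ω] (Q : Measure Ω) [IsProbabilityMeasure Q]
    (r : Ω → ℝ) (hr : Measurable r) (hr_bdd : ∃ C : ℝ, ∀ x, |r x| ≤ C)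
    (β : ℝ) (hβ : 0 < β)
    (Z : ℝ) (hZ : Z = ∫ x, exp (r x / β) ∂Q)
    (Qstar : Measure Ω)
    (hQstar : Qstar = Q.withDensity (fun x => ENNReal.ofReal (exp (r x / β) / Z)))
    (p : Ω → ℝ) (hp : Measurable p) (hp_pos : ∀ᵐ x ∂Q, 0 < p x)
    (P : Measure Ω) (hP : P = Q.withDensity (fun x => ENNReal.ofReal (p x)))
    [IsProbabilityMeasure P] :
    P = Qstar ↔
      ∀ᵐ xy : Ω × Ω ∂(Q.prod Q),
        Real.log (p xy.1) - Real.log (p xy.2) = (r xy.1 - r xy.2) / β := by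
  obtain ⟨C, hC⟩ := hr_bdd
  have hint : Integrable (fun x => exp (r x / β)) Q :=
    integrable_exp_of_le (hr.div_const β).aestronglyMeasurable
      (ae_of_all _ fun x => div_le_div_of_nonneg_right (abs_le.1 (hC x)).2 hβ.le)
  subst hP hQstar hZ
  change _ = Q.tilted (fun x => r x / β) ↔ _
  rw [withDensity_ofReal_eq_tilted_iff hint hp hp_pos,
    ← ae_prod_eq_iff_exists_ae_eq_const (g := fun x => log (p x) - r x / β)]
  refine Filter.eventually_congr (ae_of_all _ fun xy => ?_)
  rw [sub_div]
  constructor <;> intro h <;> linarith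
end

section
/- Zero reward-difference-prediction loss characterizes the optimum: let Ω be a measurable space, Q a probability measure on Ω, r : Ω → ℝ a bounded measurable function, β > 0, Z = ∫ exp(r(x)/β) dQ(x), and Q* = Q.withDensity (fun x => exp(r(x)/β) / Z). Let P be a probability measure on Ω of the form P = Q.withDensity p for a measurable function p : Ω → ℝ with p(x) > 0 for Q-almost every x, and suppose the function (x, y) ↦ (log p(x) − log p(y) − (r(x) − r(y))/β)² is integrable with respect to Q ⊗ Q. Define the loss L(P) = ∫ (log p(x) − log p(y) − (r(x) − r(y))/β)² d(Q ⊗ Q)(x, y). Then P = Q* if and only if L(P) = 0. -/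
/-!
Both `P` and `Q*` are exponential tiltings of `Q`, by `log p` and by `r / β`. Two tiltings agree
exactly when their exponents differ by a `Q`-a.e. constant, since the normalizing constants absorb
the shift. On the other hand the loss vanishes exactly when `log p x - r x / β = log p y - r y / β`
for `(Q ⊗ Q)`-a.e. pair, i.e. exactly when `log p - r / β` is `Q`-a.e. constant.
-/

open MeasureTheory Real ENNReal
open scoped Classical

namespace MeasureTheory

variable {Ω : Type*} [MeasurableSpace Ω] {μ : Measure Ω}

variable (μ) in
lemma tilted_const_add (f : Ω → ℝ) (c : ℝ) :
    μ.tilted (fun x => c + f x) = μ.tilted f := by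
  simp only [Measure.tilted, exp_add, integral_const_mul]
  congr with x
  rw [mul_div_mul_left _ _ (exp_pos c).ne']

lemma tilted_eq_tilted_iff [SigmaFinite μ] {f g : Ω → ℝ} (hf : μ.tilted f ≠ 0) :
    μ.tilted f = μ.tilted g ↔ ∃ c, ∀ᵐ x ∂μ, f x - g x = c := by
  constructor
  · intro hfg
    have hf_int : Integrable (fun x => exp (f x)) μ := by
      by_contra h
      exact hf (tilted_of_not_integrable h)
    have hg_int : Integrable (fun x => exp (g x)) μ := by
      by_contra h
      exact hf (hfg.trans (tilted_of_not_integrable h))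
    refine ⟨log (∫ x, exp (f x) ∂μ) - log (∫ x, exp (g x) ∂μ), ?_⟩
    filter_upwards [log_rnDeriv_tilted_left_self hf_int, log_rnDeriv_tilted_left_self hg_int]
      with x hx_f hx_g
    rw [hfg] at hx_f
    linarith
  · rintro ⟨c, hc⟩
    rw [tilted_congr (hc.mono fun x hx => sub_eq_iff_eq_add.mp hx), tilted_const_add]

lemma withDensity_ofReal_eq_tilted_log {p : Ω → ℝ} (hp : AEStronglyMeasurable p μ)
    (hp_pos : ∀ᵐ x ∂μ, 0 < p x) (h_one : ∫⁻ x, ENNReal.ofReal (p x) ∂μ = 1) :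
    μ.withDensity (fun x => ENNReal.ofReal (p x)) = μ.tilted (fun x => log (p x)) := by
  have h_exp_log : (fun x => exp (log (p x))) =ᵐ[μ] p := hp_pos.mono fun x hx => exp_log hx
  have h_norm : ∫ x, exp (log (p x)) ∂μ = 1 := by
    rw [integral_congr_ae h_exp_log,
      integral_eq_lintegral_of_nonneg_ae (hp_pos.mono fun x hx => hx.le) hp, h_one,
      ENNReal.toReal_one]
  refine withDensity_congr_ae ?_
  filter_upwards [h_exp_log] with x hx
  rw [h_norm, div_one, hx]

lemma ae_prod_self_eq_iff_exists_ae_eq_const {α : Type*} [SFinite μ] [NeZero μ] {h : Ω → α} :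
    (∀ᵐ xy ∂μ.prod μ, h xy.1 = h xy.2) ↔ ∃ c, ∀ᵐ x ∂μ, h x = c := by
  constructor
  · intro h_pair
    obtain ⟨x₀, hx₀⟩ := (Measure.ae_ae_of_ae_prod h_pair).exists
    exact ⟨h x₀, hx₀.mono fun y hy => hy.symm⟩
  · rintro ⟨c, hc⟩
    filter_upwards [Measure.quasiMeasurePreserving_fst.ae hc,
      Measure.quasiMeasurePreserving_snd.ae hc] with xy hx hy
    rw [hx, hy]

end MeasureTheory

theorem eq_tilted_iff_rdp_loss_eq_zero_general
    {Ω : Type*} [MeasurableSpace Ω] (Q : Measure Ω) [IsProbabilityMeasure Q]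
    (r : Ω → ℝ)
    (β : ℝ)
    (Z : ℝ) (hZ : Z = ∫ x, exp (r x / β) ∂Q)
    (Qstar : Measure Ω)
    (hQstar : Qstar = Q.withDensity (fun x => ENNReal.ofReal (exp (r x / β) / Z)))
    (p : Ω → ℝ) (hp : Measurable p) (hp_pos : ∀ᵐ x ∂Q, 0 < p x)
    (P : Measure Ω) (hP : P = Q.withDensity (fun x => ENNReal.ofReal (p x)))
    [IsProbabilityMeasure P]
    (hint : Integrable
      (fun xy : Ω × Ω =>
        (Real.log (p xy.1) - Real.log (p xy.2) - (r xy.1 - r xy.2) / β) ^ 2)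
      (Q.prod Q)) :
    P = Qstar ↔
      ∫ xy : Ω × Ω,
          (Real.log (p xy.1) - Real.log (p xy.2) - (r xy.1 - r xy.2) / β) ^ 2
          ∂(Q.prod Q) = 0 := by
  have h_one : ∫⁻ x, ENNReal.ofReal (p x) ∂Q = 1 := by
    rw [← setLIntegral_univ, ← withDensity_apply _ .univ, ← hP, measure_univ]
  have hP_tilted : P = Q.tilted fun x => log (p x) :=
    hP.trans (withDensity_ofReal_eq_tilted_log hp.aestronglyMeasurable hp_pos h_one)
  have hQstar_tilted : Qstar = Q.tilted fun x => r x / β := by rw [hQstar, hZ]; rfl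
  rw [hP_tilted, hQstar_tilted, tilted_eq_tilted_iff (hP_tilted ▸ IsProbabilityMeasure.ne_zero P),
    integral_eq_zero_iff_of_nonneg (fun _ => sq_nonneg _) hint,
    ← ae_prod_self_eq_iff_exists_ae_eq_const (h := fun x => log (p x) - r x / β)]
  refine Filter.eventually_congr (.of_forall fun xy => ?_)
  rw [Pi.zero_apply, sq_eq_zero_iff, sub_div]
  constructor <;> intro h <;> linarith

/-- Zero reward-difference-prediction loss characterizes the optimum: a probability
measure `P = Q.withDensity p` with `Q`-a.e. positive density `p` equals the tilted
optimal measure `Q*` if and only if the RDP loss, the mean squared error over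
`(Q ⊗ Q)` between the predicted reward difference `log (p x) - log (p y)` and the
true scaled reward difference `(r x - r y) / β`, vanishes. -/
theorem eq_tilted_iff_rdp_loss_eq_zero
    {Ω : Type*} [MeasurableSpace Ω] (Q : Measure Ω) [IsProbabilityMeasure Q]
    (r : Ω → ℝ) (hr : Measurable r) (hr_bdd : ∃ C : ℝ, ∀ x, |r x| ≤ C)
    (β : ℝ) (hβ : 0 < β)
    (Z : ℝ) (hZ : Z = ∫ x, exp (r x / β) ∂Q)
    (Qstar : Measure Ω)
    (hQstar : Qstar = Q.withDensity (fun x => ENNReal.ofReal (exp (r x / β) / Z)))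
    (p : Ω → ℝ) (hp : Measurable p) (hp_pos : ∀ᵐ x ∂Q, 0 < p x)
    (P : Measure Ω) (hP : P = Q.withDensity (fun x => ENNReal.ofReal (p x)))
    [IsProbabilityMeasure P]
    (hint : Integrable
      (fun xy : Ω × Ω =>
        (Real.log (p xy.1) - Real.log (p xy.2) - (r xy.1 - r xy.2) / β) ^ 2)
      (Q.prod Q)) :
    P = Qstar ↔
      ∫ xy : Ω × Ω,
          (Real.log (p xy.1) - Real.log (p xy.2) - (r xy.1 - r xy.2) / β) ^ 2
          ∂(Q.prod Q) = 0 :=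
  eq_tilted_iff_rdp_loss_eq_zero_general Q r β Z hZ Qstar hQstar p hp hp_pos P hP hint
end

section
/- Equivalence of reward maximization and reward difference prediction: let Ω be a measurable space, Q a probability measure on Ω, r : Ω → ℝ a bounded measurable function, β > 0, and Z = ∫ exp(r(x)/β) dQ(x). Let P be a probability measure on Ω of the form P = Q.withDensity p for a measurable function p : Ω → ℝ with p(x) > 0 for Q-almost every x, KL(P ‖ Q) < ∞, and such that (x, y) ↦ (log p(x) − log p(y) − (r(x) − r(y))/β)² is integrable with respect to Q ⊗ Q. Then the following are equivalent: (i) P maximizes the objective P' ↦ ∫ r dP' − β · KL(P' ‖ Q) over all probability measures P' absolutely continuous with respect to Q, i.e., ∫ r dP − β · KL(P ‖ Q) = β · log Z; (ii) ∫ (log p(x) − log p(y) − (r(x) − r(y))/β)² d(Q ⊗ Q)(x, y) = 0. -/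
open MeasureTheory Real ENNReal
open scoped Classical

/-- Gibbs' inequality core: if `g > 0` a.e., `g` and `log g` are integrable, and
`∫ g = 1`, then `∫ -log g ≥ 0` with equality iff `g = 1` a.e. -/
lemma gibbs_core {Ω : Type*} [MeasurableSpace Ω] (P : Measure Ω) [IsProbabilityMeasure P]
    (g : Ω → ℝ) (hg_pos : ∀ᵐ x ∂P, 0 < g x) (hg_int : Integrable g P)
    (hlog_int : Integrable (fun x => Real.log (g x)) P)
    (hg_one : ∫ x, g x ∂P = 1) :
    0 ≤ ∫ x, -Real.log (g x) ∂P ∧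
      ((∫ x, -Real.log (g x) ∂P = 0) ↔ g =ᵐ[P] fun _ => 1) := by
  set φ : Ω → ℝ := fun x => g x - 1 - Real.log (g x) with hφ
  have hφ_int : Integrable φ P := (hg_int.sub (integrable_const 1)).sub hlog_int
  have hφ_nonneg : 0 ≤ᵐ[P] φ := by
    filter_upwards [hg_pos] with x hx
    have := Real.log_le_sub_one_of_pos hx
    simp only [φ, Pi.zero_apply]
    linarith
  have hφ_eq : ∫ x, φ x ∂P = ∫ x, -Real.log (g x) ∂P := by
    have e1 : ∫ x, φ x ∂P = ∫ x, (g x - 1) ∂P - ∫ x, Real.log (g x) ∂P :=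
      integral_sub (hg_int.sub (integrable_const 1)) hlog_int
    have e2 : ∫ x, (g x - 1) ∂P = ∫ x, g x ∂P - ∫ x, (1 : ℝ) ∂P :=
      integral_sub hg_int (integrable_const 1)
    rw [e1, e2, hg_one, integral_neg, integral_const]
    simp
  constructor
  · rw [← hφ_eq]
    exact integral_nonneg_of_ae hφ_nonneg
  · rw [← hφ_eq, integral_eq_zero_iff_of_nonneg_ae hφ_nonneg hφ_int]
    constructor
    · intro h
      filter_upwards [h, hg_pos] with x hx hpos
      by_contra hne
      have hlt := Real.log_lt_sub_one_of_pos hpos hne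
      have : φ x = 0 := hx
      simp only [φ] at this
      linarith
    · intro h
      filter_upwards [h] with x hx
      simp [φ, hx]

/-- Equivalence of reward maximization and reward difference prediction: a probability
measure `P = Q.withDensity p` with `Q`-a.e. positive density, finite KL divergence to
`Q`, and integrable squared reward-difference-prediction error maximizes the
KL-regularized reward objective (i.e. attains the optimal value `β * log Z`) if and
only if its reward-difference-prediction loss over `Q ⊗ Q` is zero. -/
theorem maximizer_iff_rdp_loss_eq_zero
    {Ω : Type*} [MeasurableSpace Ω] (Q : Measure Ω) [IsProbabilityMeasure Q]
    (r : Ω → ℝ) (hr : Measurable r) (hr_bdd : ∃ C : ℝ, ∀ x, |r x| ≤ C)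
    (β : ℝ) (hβ : 0 < β)
    (Z : ℝ) (hZ : Z = ∫ x, exp (r x / β) ∂Q)
    (p : Ω → ℝ) (hp : Measurable p) (hp_pos : ∀ᵐ x ∂Q, 0 < p x)
    (P : Measure Ω) (hP : P = Q.withDensity (fun x => ENNReal.ofReal (p x)))
    [IsProbabilityMeasure P] (hfin : klDiv P Q < ⊤)
    (hint : Integrable
      (fun xy : Ω × Ω =>
        (Real.log (p xy.1) - Real.log (p xy.2) - (r xy.1 - r xy.2) / β) ^ 2)
      (Q.prod Q)) :
    (((∫ x, r x ∂P : ℝ) : EReal) - (β : EReal) * (klDiv P Q : EReal)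
        = ((β * Real.log Z : ℝ) : EReal)) ↔
      ∫ xy : Ω × Ω,
          (Real.log (p xy.1) - Real.log (p xy.2) - (r xy.1 - r xy.2) / β) ^ 2
          ∂(Q.prod Q) = 0 := by
  obtain ⟨C, hC⟩ := hr_bdd
  have hβ0 : β ≠ 0 := hβ.ne'
  have hrb_meas : Measurable fun x => rexp (r x / β) := (hr.div_const β).exp
  have hexp_int : Integrable (fun x => rexp (r x / β)) Q := by
    refine Integrable.mono' (integrable_const (rexp (|C| / β)))
      hrb_meas.aestronglyMeasurable ?_
    refine Filter.Eventually.of_forall fun x => ?_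
    rw [Real.norm_eq_abs, abs_of_pos (exp_pos _)]
    refine Real.exp_le_exp.mpr ?_
    gcongr
    exact (abs_le.mp (hC x)).2.trans (le_abs_self C)
  have hZpos : 0 < Z := by
    rw [hZ]; exact integral_exp_pos hexp_int
  have hPQ : P ≪ Q := by
    rw [hP]; exact withDensity_absolutelyContinuous Q _
  have hQP : Q ≪ P := by
    rw [hP]
    refine withDensity_absolutelyContinuous' hp.ennreal_ofReal.aemeasurable ?_
    filter_upwards [hp_pos] with x hx
    simp [ENNReal.ofReal_eq_zero, not_le, hx]
  have hcond : P ≪ Q ∧ Integrable (llr P Q) P := by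
    by_contra hc
    rw [klDiv, if_neg hc] at hfin
    exact lt_irrefl _ hfin
  have hkl : klDiv P Q = ENNReal.ofReal (∫ x, llr P Q x ∂P) := by
    rw [klDiv, if_pos hcond]
  have hrnQ : P.rnDeriv Q =ᵐ[Q] fun x => ENNReal.ofReal (p x) := by
    rw [hP]; exact Measure.rnDeriv_withDensity Q hp.ennreal_ofReal
  have hllrQ : llr P Q =ᵐ[Q] fun x => Real.log (p x) := by
    filter_upwards [hrnQ, hp_pos] with x hx hpos
    rw [llr, hx, ENNReal.toReal_ofReal hpos.le]
  have hllrP : llr P Q =ᵐ[P] fun x => Real.log (p x) := hllrQ.filter_mono hPQ.ae_le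
  have hlogp_int : Integrable (fun x => Real.log (p x)) P :=
    (integrable_congr hllrP).mp hcond.2
  set K := ∫ x, Real.log (p x) ∂P with hKdef
  have hKeq : ∫ x, llr P Q x ∂P = K := integral_congr_ae hllrP
  have hr_int : Integrable r P :=
    Integrable.mono' (integrable_const C) hr.aestronglyMeasurable
      (Filter.Eventually.of_forall fun x => by rw [Real.norm_eq_abs]; exact hC x)
  have hP' : P = Q.withDensity fun x => ((p x).toNNReal : ℝ≥0∞) := hP
  have hq_meas : AEMeasurable (fun x => (p x).toNNReal) Q := hp.real_toNNReal.aemeasurable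
  have hint_iff : ∀ g : Ω → ℝ, Integrable g P ↔ Integrable (fun x => p x * g x) Q := by
    intro g
    rw [hP', integrable_withDensity_iff_integrable_smul₀ hq_meas]
    refine integrable_congr ?_
    filter_upwards [hp_pos] with x hx
    simp [NNReal.smul_def, Real.coe_toNNReal _ hx.le]
  have hintegral_eq : ∀ g : Ω → ℝ, ∫ x, g x ∂P = ∫ x, p x * g x ∂Q := by
    intro g
    rw [hP', integral_withDensity_eq_integral_smul₀ hq_meas]
    refine integral_congr_ae ?_
    filter_upwards [hp_pos] with x hx
    simp [NNReal.smul_def, Real.coe_toNNReal _ hx.le]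
  have hp_posP : ∀ᵐ x ∂P, 0 < p x := hp_pos.filter_mono hPQ.ae_le
  -- K ≥ 0 via Gibbs with g = p⁻¹
  have hinv_int : Integrable (fun x => (p x)⁻¹) P := by
    rw [hint_iff]
    refine (integrable_const (1 : ℝ)).congr ?_
    filter_upwards [hp_pos] with x hx
    exact (mul_inv_cancel₀ hx.ne').symm
  have hinv_one : ∫ x, (p x)⁻¹ ∂P = 1 := by
    rw [hintegral_eq]
    rw [integral_congr_ae (g := fun _ => (1 : ℝ))
      (by filter_upwards [hp_pos] with x hx; exact mul_inv_cancel₀ hx.ne')]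
    simp
  have hloginv_int : Integrable (fun x => Real.log ((p x)⁻¹)) P := by
    refine hlogp_int.neg.congr ?_
    exact Filter.Eventually.of_forall fun x => (Real.log_inv _).symm
  have hKnn : 0 ≤ K := by
    have h0 := (gibbs_core P (fun x => (p x)⁻¹)
      (by filter_upwards [hp_posP] with x hx; positivity) hinv_int hloginv_int hinv_one).1
    have heq : ∫ x, -Real.log ((p x)⁻¹) ∂P = K := by
      refine integral_congr_ae ?_
      exact Filter.Eventually.of_forall fun x => by simp [Real.log_inv]
    linarith [heq ▸ h0]
  -- the function h
  set h : Ω → ℝ := fun x => rexp (r x / β - Real.log Z) / p x with hhdef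
  have hh_posP : ∀ᵐ x ∂P, 0 < h x := by
    filter_upwards [hp_posP] with x hx
    exact div_pos (exp_pos _) hx
  have hph : ∀ᵐ x ∂Q, p x * h x = rexp (r x / β - Real.log Z) := by
    filter_upwards [hp_pos] with x hx
    show p x * (rexp (r x / β - Real.log Z) / p x) = _
    field_simp
  have hexp2_int : Integrable (fun x => rexp (r x / β - Real.log Z)) Q := by
    simpa [Real.exp_sub] using hexp_int.div_const (rexp (Real.log Z))
  have hh_int : Integrable h P := by
    rw [hint_iff]
    exact hexp2_int.congr (by filter_upwards [hph] with x hx; exact hx.symm)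
  have hh_one : ∫ x, h x ∂P = 1 := by
    rw [hintegral_eq, integral_congr_ae hph]
    simp_rw [Real.exp_sub, Real.exp_log hZpos]
    rw [integral_div, ← hZ, div_self hZpos.ne']
  have hlogh : ∀ᵐ x ∂P, Real.log (h x) = r x / β - Real.log Z - Real.log (p x) := by
    filter_upwards [hp_posP] with x hx
    rw [hhdef]
    rw [Real.log_div (Real.exp_ne_zero _) hx.ne', Real.log_exp]
  have hlogh_int : Integrable (fun x => Real.log (h x)) P := by
    refine (((hr_int.div_const β).sub (integrable_const (Real.log Z))).sub hlogp_int).congr ?_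
    filter_upwards [hlogh] with x hx
    exact hx.symm
  have hcore := gibbs_core P h hh_posP hh_int hlogh_int hh_one
  have hneglog : ∫ x, -Real.log (h x) ∂P = K - (∫ x, r x ∂P) / β + Real.log Z := by
    rw [integral_congr_ae (g := fun x => Real.log (p x) - r x / β + Real.log Z)
      (by filter_upwards [hlogh] with x hx; rw [hx]; ring)]
    have e1 : ∫ x, (Real.log (p x) - r x / β + Real.log Z) ∂P
        = ∫ x, (Real.log (p x) - r x / β) ∂P + ∫ x, (Real.log Z : ℝ) ∂P :=
      integral_add (hlogp_int.sub (hr_int.div_const β)) (integrable_const _)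
    have e2 : ∫ x, (Real.log (p x) - r x / β) ∂P
        = ∫ x, Real.log (p x) ∂P - ∫ x, r x / β ∂P :=
      integral_sub hlogp_int (hr_int.div_const β)
    rw [e1, e2, integral_div, integral_const]
    simp [hKdef]
  -- reduce the EReal statement
  have hKLcast : (klDiv P Q : EReal) = ((K : ℝ) : EReal) := by
    rw [hkl, hKeq, EReal.coe_ennreal_ofReal, max_eq_left hKnn]
  have hLHS : (((∫ x, r x ∂P : ℝ) : EReal) - (β : EReal) * (klDiv P Q : EReal)
        = ((β * Real.log Z : ℝ) : EReal)) ↔ ∫ x, r x ∂P - β * K = β * Real.log Z := by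
    rw [hKLcast, ← EReal.coe_mul, ← EReal.coe_sub]
    exact ⟨fun hh => by exact_mod_cast hh, fun hh => by exact_mod_cast hh⟩
  have halg : (∫ x, r x ∂P - β * K = β * Real.log Z) ↔ ∫ x, -Real.log (h x) ∂P = 0 := by
    rw [hneglog]
    constructor
    · intro hh
      field_simp
      linarith
    · intro hh
      field_simp at hh
      linarith
  set F : Ω → ℝ := fun x => Real.log (p x) - r x / β with hFdef
  have hFh : (h =ᵐ[P] fun _ => (1 : ℝ)) ↔ F =ᵐ[Q] fun _ => -Real.log Z := by
    constructor
    · intro hh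
      have hhQ : h =ᵐ[Q] fun _ => (1 : ℝ) := hh.filter_mono hQP.ae_le
      filter_upwards [hhQ, hp_pos] with x hx hpx
      have hx' : rexp (r x / β - Real.log Z) = p x := (div_eq_one_iff_eq hpx.ne').mp hx
      have : Real.log (p x) = r x / β - Real.log Z := by
        rw [← hx', Real.log_exp]
      simp only [F]
      rw [this]; ring
    · intro hh
      have hhP : F =ᵐ[P] fun _ => -Real.log Z := hh.filter_mono hPQ.ae_le
      filter_upwards [hhP, hp_posP] with x hx hpx
      have hx' : Real.log (p x) = r x / β - Real.log Z := by
        simp only [F] at hx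
        linarith
      have hpe : p x = rexp (r x / β - Real.log Z) := by
        rw [← Real.exp_log hpx, hx']
      simp [hhdef, hpe, div_self (Real.exp_ne_zero _)]
  -- the RHS side
  have hsq : ∀ xy : Ω × Ω,
      Real.log (p xy.1) - Real.log (p xy.2) - (r xy.1 - r xy.2) / β = F xy.1 - F xy.2 := by
    intro xy
    simp only [F, sub_div]
    ring
  have hRHS : (∫ xy : Ω × Ω,
        (Real.log (p xy.1) - Real.log (p xy.2) - (r xy.1 - r xy.2) / β) ^ 2
        ∂(Q.prod Q) = 0) ↔
      (fun xy : Ω × Ω => F xy.1 - F xy.2) =ᵐ[Q.prod Q] 0 := by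
    rw [integral_eq_zero_iff_of_nonneg_ae
      (Filter.Eventually.of_forall fun xy => sq_nonneg _) hint]
    constructor <;> intro hh <;> filter_upwards [hh] with xy hxy
    · have : (Real.log (p xy.1) - Real.log (p xy.2) - (r xy.1 - r xy.2) / β) ^ 2 = 0 := hxy
      have h0 := (pow_eq_zero_iff two_ne_zero).mp this
      simp only [Pi.zero_apply]
      rw [← hsq xy]
      exact h0
    · have h0 : F xy.1 - F xy.2 = 0 := hxy
      show (Real.log (p xy.1) - Real.log (p xy.2) - (r xy.1 - r xy.2) / β) ^ 2 = 0
      rw [hsq xy, h0]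
      ring
  have hprod : ((fun xy : Ω × Ω => F xy.1 - F xy.2) =ᵐ[Q.prod Q] 0) ↔
      F =ᵐ[Q] fun _ => -Real.log Z := by
    constructor
    · intro hh
      have h2 : ∀ᵐ x ∂Q, ∀ᵐ y ∂Q, F x - F y = 0 := Measure.ae_ae_of_ae_prod hh
      obtain ⟨x₀, hx₀⟩ := h2.exists
      have hFc : F =ᵐ[Q] fun _ => F x₀ := by
        filter_upwards [hx₀] with y hy
        linarith
      -- normalization: F x₀ = -log Z
      have hpc : (fun x => ENNReal.ofReal (p x)) =ᵐ[Q]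
          fun x => ENNReal.ofReal (rexp (F x₀ + r x / β)) := by
        filter_upwards [hFc, hp_pos] with x hx hpx
        have hx' : Real.log (p x) = F x₀ + r x / β := by
          simp only [F] at hx
          linarith
        rw [← Real.exp_log hpx, hx']
      have hint3 : Integrable (fun x => rexp (F x₀ + r x / β)) Q := by
        simp_rw [Real.exp_add]
        exact hexp_int.const_mul _
      have h1 : (1 : ℝ≥0∞) = ∫⁻ x, ENNReal.ofReal (rexp (F x₀ + r x / β)) ∂Q := by
        have huniv : P Set.univ = 1 := measure_univ
        rw [hP, withDensity_apply _ MeasurableSet.univ, setLIntegral_univ] at huniv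
        rw [← huniv]
        exact lintegral_congr_ae hpc
      rw [← ofReal_integral_eq_lintegral_ofReal hint3
        (Filter.Eventually.of_forall fun x => (exp_pos _).le)] at h1
      have hZint : ∫ x, rexp (F x₀ + r x / β) ∂Q = rexp (F x₀) * Z := by
        simp_rw [Real.exp_add]
        rw [integral_const_mul, hZ]
      rw [hZint] at h1
      have h2' : rexp (F x₀) * Z = 1 := ENNReal.ofReal_eq_one.mp h1.symm
      have hcF : F x₀ = -Real.log Z := by
        have hez : rexp (F x₀) = Z⁻¹ := by
          field_simp at h2' ⊢
          linarith
        calc F x₀ = Real.log (rexp (F x₀)) := (Real.log_exp _).symm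
          _ = Real.log Z⁻¹ := by rw [hez]
          _ = -Real.log Z := Real.log_inv Z
      exact hFc.trans (by rw [hcF])
    · intro hh
      have h1 : F ∘ Prod.fst =ᵐ[Q.prod Q] (fun _ => -Real.log Z) ∘ Prod.fst :=
        Measure.quasiMeasurePreserving_fst.ae_eq_comp hh
      have h2 : F ∘ Prod.snd =ᵐ[Q.prod Q] (fun _ => -Real.log Z) ∘ Prod.snd :=
        Measure.quasiMeasurePreserving_snd.ae_eq_comp hh
      filter_upwards [h1, h2] with xy hx1 hx2
      simp only [Function.comp_apply] at hx1 hx2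
      simp only [Pi.zero_apply]
      rw [hx1, hx2]
      ring
  exact (hLHS.trans (halg.trans (hcore.2.trans hFh))).trans
    (hRHS.trans hprod).symm
end
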